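/- Fix ε > 0 and let U₁ = {(a,b) ∈ ([0,1/2)×[1/2,1)) ∪ ([1/2,1)×[0,1/2)) : a+b < 3/4}, U₂ = {(a,b) ∈ [0,1/2)×[0,1) : 3/4 + ε < a+b < 5/4}, U = U₁ ∪ U₂. If x, z ∈ U and y* = (x+z)/2, then y* ≠ u + ξ for every u ∈ U and every ξ ∈ {(1/2,1/2), (1/2,0), (0,1/2)}. -/
import Mathlib


/-- The set `U₁` from Definition 3.5 of the paper. -/
def U1 : Set (ℝ × ℝ) :=
  {v | (v ∈ Set.Ico (0:ℝ) (1/2) ×ˢ Set.Ico (1/2:ℝ) 1 ∪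
        Set.Ico (1/2:ℝ) 1 ×ˢ Set.Ico (0:ℝ) (1/2)) ∧ v.1 + v.2 < 3/4}

/-- The set `U₂` from Definition 3.5 of the paper. -/
def U2 (ε : ℝ) : Set (ℝ × ℝ) :=
  {v | v ∈ Set.Ico (0:ℝ) (1/2) ×ˢ Set.Ico (0:ℝ) 1 ∧ 3/4 + ε < v.1 + v.2 ∧ v.1 + v.2 < 5/4}

lemma mem_facts (ε : ℝ) (hε : 0 < ε) (v : ℝ × ℝ) (hv : v ∈ U1 ∪ U2 ε) :
    0 ≤ v.1 ∧ v.1 < 1 ∧ 0 ≤ v.2 ∧ v.2 < 1 ∧ v.1 + v.2 < 5/4 ∧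
      (1/2 ≤ v.1 → v.1 + v.2 < 3/4) := by
  simp only [U1, U2, Set.mem_union, Set.mem_setOf_eq, Set.mem_prod, Set.mem_Ico] at hv
  rcases hv with ⟨⟨⟨h1, h2⟩, h3, h4⟩ | ⟨⟨h1, h2⟩, h3, h4⟩, hs⟩ | ⟨⟨⟨h1, h2⟩, h3, h4⟩, hs1, hs2⟩ <;>
    exact ⟨by linarith, by linarith, by linarith, by linarith, by linarith,
      fun h => by linarith⟩

theorem one_sided_rounding (ε : ℝ) (hε : 0 < ε) (hε' : ε < 1/4)
    (x z ystar : ℝ × ℝ) (hx : x ∈ U1 ∪ U2 ε) (hz : z ∈ U1 ∪ U2 ε)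
    (hmid : ystar = (1/2 : ℝ) • (x + z)) :
    ∀ u ∈ U1 ∪ U2 ε,
      ∀ ξ ∈ ({((1:ℝ)/2, (1:ℝ)/2), ((1:ℝ)/2, 0), (0, (1:ℝ)/2)} : Set (ℝ × ℝ)),
        ystar ≠ u + ξ := by
  intro u hu ξ hξ heq
  rw [hmid] at heq
  have e1 : (1/2:ℝ) * x.1 + (1/2:ℝ) * z.1 = u.1 + ξ.1 := by
    have := congrArg Prod.fst heq; simpa using this
  have e2 : (1/2:ℝ) * x.2 + (1/2:ℝ) * z.2 = u.2 + ξ.2 := by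
    have := congrArg Prod.snd heq; simpa using this
  obtain ⟨hx1, hx2, hx3, hx4, hxs, hxk⟩ := mem_facts ε hε x hx
  obtain ⟨hz1, hz2, hz3, hz4, hzs, hzk⟩ := mem_facts ε hε z hz
  obtain ⟨hu1, hu2, hu3, hu4, hus, huk⟩ := mem_facts ε hε u hu
  -- if x.1 + z.1 ≥ 1 then one of x, z has first coord ≥ 1/2, hence its sum < 3/4
  have key : 1 ≤ x.1 + z.1 → x.1 + x.2 + (z.1 + z.2) < 2 := by
    intro h
    by_cases hc : 1/2 ≤ x.1
    · have := hxk hc; linarith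
    · have : 1/2 ≤ z.1 := by linarith
      have := hzk this; linarith
  -- membership info on u
  simp only [U1, U2, Set.mem_union, Set.mem_setOf_eq, Set.mem_prod, Set.mem_Ico] at hu
  simp only [Set.mem_insert_iff, Set.mem_singleton_iff] at hξ
  rcases hu with ⟨hub, hus'⟩ | ⟨⟨⟨h1, h2⟩, h3, h4⟩, hs1, hs2⟩
  · -- u ∈ U1 : sum < 3/4, and one coordinate ≥ 1/2
    rcases hξ with rfl | rfl | rfl
    · -- ξ = (1/2, 1/2): sum of ystar ≥ 3/2 > 5/4
      rcases hub with ⟨⟨h1, h2⟩, h3, h4⟩ | ⟨⟨h1, h2⟩, h3, h4⟩ <;>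
        simp only at e1 e2 <;> linarith
    · -- ξ = (1/2, 0): ystar.1 ≥ 1/2 so x.1 + z.1 ≥ 1
      have h1z : 1 ≤ x.1 + z.1 := by
        have : (0:ℝ) ≤ u.1 := hu1
        simp only at e1; linarith
      have hk := key h1z
      rcases hub with ⟨⟨h1, h2⟩, h3, h4⟩ | ⟨⟨h1, h2⟩, h3, h4⟩ <;>
        simp only at e1 e2 <;> linarith
    · -- ξ = (0, 1/2)
      rcases hub with ⟨⟨h1, h2⟩, h3, h4⟩ | ⟨⟨h1, h2⟩, h3, h4⟩
      · -- u.2 ≥ 1/2 : ystar.2 = u.2 + 1/2 ≥ 1, impossible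
        simp only at e2; linarith
      · -- u.1 ≥ 1/2 : ystar.1 = u.1 ≥ 1/2 so x.1 + z.1 ≥ 1
        have h1z : 1 ≤ x.1 + z.1 := by simp only at e1; linarith
        have hk := key h1z
        simp only at e1 e2; linarith
  · -- u ∈ U2 : sum > 3/4 + ε, so ystar sum > 5/4 + ε > 5/4, impossible
    rcases hξ with rfl | rfl | rfl <;> simp only at e1 e2 <;> linarith
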